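/- arXiv:math/0011181 — 3 statements merged into one kernel-verified Lean document; each statement's English description precedes it below -/
import Mathlib

section
/- Let P be a finite poset, M a module, and F_{M,≥p} the diagram over P with value M on {q : q ≥ p} (with identity transition maps) and 0 elsewhere. Then the Roos complex of F_{M,≥p} is isomorphic to the simplicial chain complex of the order complex K(≥ p) with coefficients in M. -/
/-- Chains of `m` elements of a preorder `P`: strictly increasing `m`-tuples. These are the
`(m-1)`-simplices of the order complex `K(P)`; for `m = 0` there is exactly one (empty) chain. -/
@[reducible] def pchains (P : Type*) [Preorder P] (m : ℕ) : Type _ :=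
  {f : Fin m → P // StrictMono f}

/-- The boundary map of the augmented simplicial chain complex of the order complex of `P`
with coefficients in `M`: the alternating sum over deletions of a vertex.  In degree `0`
this is the augmentation onto `pchains P 0 →₀ M ≃ M`. -/
noncomputable def simpBdry (A : Type*) [CommRing A] (M : Type*) [AddCommGroup M] [Module A M]
    (P : Type*) [Preorder P] (m : ℕ) :
    (pchains P (m + 1) →₀ M) →ₗ[A] (pchains P m →₀ M) :=
  Finsupp.lsum ℕ fun c =>
    ∑ i : Fin (m + 1), ((-1 : A) ^ (i : ℕ)) •
      (Finsupp.lsingle (⟨c.1 ∘ i.succAbove, c.2.comp (Fin.strictMono_succAbove i)⟩ : pchains P m))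

/-- Cycles of the augmented simplicial chain complex (everything in lowest degree). -/
noncomputable def simpCycles (A : Type*) [CommRing A] (M : Type*) [AddCommGroup M] [Module A M]
    (P : Type*) [Preorder P] : (m : ℕ) → Submodule A (pchains P m →₀ M)
  | 0 => ⊤
  | (m + 1) => LinearMap.ker (simpBdry A M P m)

/-- `simpHomology A M P m` is the reduced simplicial homology `H̃_{m-1}(K(P); M)` of the order
complex of `P` with coefficients in the `A`-module `M`, computed from the augmented chain
complex; with this convention `H̃_{-1}(∅; M) = M` (the case `m = 0`, `P = ∅`). -/
@[reducible] noncomputable def simpHomology (A : Type*) [CommRing A] (M : Type*) [AddCommGroup M] [Module A M]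
    (P : Type*) [Preorder P] (m : ℕ) : Type _ :=
  ↥(simpCycles A M P m) ⧸
    (Submodule.comap (simpCycles A M P m).subtype (LinearMap.range (simpBdry A M P m)))

/-- Degree-`m` part of the Roos complex of the diagram `F_{M,≥p}` over `P` (value `M` with
identity transition maps on `{q | q ≥ p}` and `0` elsewhere): the direct sum of `F(p₀) = M`
over the chains `p₀ < … < p_m` in `P` with `p₀ ≥ p`. -/
@[reducible] noncomputable def roosGeC (A : Type*) [CommRing A] (M : Type*) [AddCommGroup M]
    [Module A M] (P : Type*) [Preorder P] (p : P) (m : ℕ) : Type _ :=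
  {c : pchains P (m + 1) // p ≤ c.1 0} →₀ M

/-- The differential of the Roos complex of `F_{M,≥p}`: the `0`-th face uses the transition
map `F(p₀ → p₁) = id`, the remaining faces delete a vertex, with alternating signs. -/
noncomputable def roosGeBdry (A : Type*) [CommRing A] (M : Type*) [AddCommGroup M] [Module A M]
    (P : Type*) [Preorder P] (p : P) (m : ℕ) :
    roosGeC A M P p (m + 1) →ₗ[A] roosGeC A M P p m :=
  Finsupp.lsum ℕ fun c =>
    ∑ i : Fin (m + 2), ((-1 : A) ^ (i : ℕ)) •
      (Finsupp.lsingle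
        (⟨⟨c.1.1 ∘ i.succAbove, c.1.2.comp (Fin.strictMono_succAbove i)⟩,
          le_trans c.2 (c.1.2.monotone (Fin.zero_le _))⟩ :
          {c : pchains P (m + 1) // p ≤ c.1 0}))


/-- Chains in `P` starting at a point `≥ p` correspond to chains in `{q // p ≤ q}`. -/
def chEquiv (P : Type*) [Preorder P] (p : P) (m : ℕ) :
    {c : pchains P (m + 1) // p ≤ c.1 0} ≃ pchains {q : P // p ≤ q} (m + 1) where
  toFun c := ⟨fun i => ⟨c.1.1 i, le_trans c.2 (c.1.2.monotone (Fin.zero_le i))⟩,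
    fun a b h => Subtype.mk_lt_mk.2 (c.1.2 h)⟩
  invFun d := ⟨⟨fun i => (d.1 i).1, fun a b h => Subtype.mk_lt_mk.1 (d.2 h)⟩, (d.1 0).2⟩
  left_inv c := rfl
  right_inv d := rfl

/-- The Roos complex of the diagram `F_{M,≥p}` is isomorphic, as a complex of `A`-modules, to
the simplicial chain complex `Simp_*(K(≥p); M)` of the order complex of `{q ∈ P | q ≥ p}`
(whose degree-`m` chains are spanned by the strictly increasing `(m+1)`-tuples). -/
theorem stmt_8 (P : Type*) [PartialOrder P] [Fintype P] (p : P)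
    (A : Type*) [CommRing A] (M : Type*) [AddCommGroup M] [Module A M] :
    ∃ e : ∀ m : ℕ, roosGeC A M P p m ≃ₗ[A] (pchains {q : P // p ≤ q} (m + 1) →₀ M),
      ∀ m : ℕ,
        (e m).toLinearMap.comp (roosGeBdry A M P p m) =
          (simpBdry A M {q : P // p ≤ q} (m + 1)).comp (e (m + 1)).toLinearMap := by
  refine ⟨fun m => Finsupp.domLCongr (chEquiv P p m), fun m => ?_⟩
  apply Finsupp.lhom_ext
  intro c x
  simp only [LinearMap.comp_apply, LinearEquiv.coe_coe, roosGeBdry, simpBdry,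
    Finsupp.lsum_single, LinearMap.sum_apply, LinearMap.smul_apply, Finsupp.lsingle_apply,
    map_sum, map_smul, Finsupp.domLCongr_single]
  rfl
end

section
/- Let R = k[x_1,...,x_n] and let α, β ∈ {-1,0}^n with |α| = |β| = l. Then the graded Ext group *Ext^1_R(H^l_{p_α}(R), H^l_{p_β}(R)) vanishes, where *Ext is computed in the category of Z^n-graded R-modules with degree-preserving morphisms. -/
open MvPolynomial

/-- `a ∈ Ω = {-1,0}^n`. -/
def isOm {n : ℕ} (a : Fin n → ℤ) : Prop := ∀ i, a i = 0 ∨ a i = -1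

/-- The face prime ideal `p_a = (xᵢ : a i = -1)`. -/
noncomputable def faceIdeal {n : ℕ} (k : Type*) [CommSemiring k] (a : Fin n → ℤ) :
    Ideal (MvPolynomial (Fin n) k) :=
  Ideal.span (MvPolynomial.X '' {i | a i = -1})

/-- `|a|`, the number of `-1` entries of `a ∈ Ω`. -/
def wt {n : ℕ} (a : Fin n → ℤ) : ℕ := (Finset.univ.filter fun i => a i = -1).card

/-- The local cohomology module `H^r_I(R)` for `R = k[x₁,…,xₙ]`, as a type. -/
abbrev LC {n : ℕ} (k : Type) [Field k] (I : Ideal (MvPolynomial (Fin n) k)) (r : ℕ) : Type :=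
  ((localCohomology I r).obj
    (ModuleCat.of (MvPolynomial (Fin n) k) (MvPolynomial (Fin n) k)))

/-- A family of `k`-subspaces indexed by `ℤⁿ` is a compatible `ℤⁿ`-grading of an
`R = k[x₁,…,xₙ]`-module when multiplication by `xᵢ` raises degrees by `eᵢ`. -/
def GradingCompat {n : ℕ} (k : Type) [Field k] (M : Type*) [AddCommGroup M]
    [Module (MvPolynomial (Fin n) k) M] [Module k M]
    (g : (Fin n → ℤ) → Submodule k M) : Prop :=
  ∀ (i : Fin n) (d : Fin n → ℤ), ∀ m ∈ g d,
    (MvPolynomial.X i : MvPolynomial (Fin n) k) • m ∈ g (d + Pi.single i 1)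

/-- `g` is the grading of an `ε`-straight module structure (internal, compatible, finite
dimensional pieces, with multiplication `x^b : M_d → M_{d+b}` bijective whenever
`d i < 0 → d i + b i < 0` for all `i`). -/
def IsEpsStraight {n : ℕ} (k : Type) [Field k] (M : Type*) [AddCommGroup M]
    [Module (MvPolynomial (Fin n) k) M] [Module k M]
    (g : (Fin n → ℤ) → Submodule k M) : Prop :=
  DirectSum.IsInternal g ∧ GradingCompat k M g ∧
  (∀ d : Fin n → ℤ, Module.Finite k ↥(g d)) ∧
  ∀ (b : Fin n → ℕ) (d : Fin n → ℤ), (∀ i, d i < 0 → d i + (b i : ℤ) < 0) →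
    (∀ y ∈ g d, ((∏ i, MvPolynomial.X i ^ b i : MvPolynomial (Fin n) k)) • y = 0 → y = 0) ∧
    (∀ z ∈ g (d + fun i => (b i : ℤ)),
      ∃ y ∈ g d, ((∏ i, MvPolynomial.X i ^ b i : MvPolynomial (Fin n) k)) • y = z)

/-- The Hilbert function of the canonical `ℤⁿ`-grading of `H^{|a|}_{p_a}(R)`: the degree-`d`
piece is one-dimensional when `dᵢ < 0` exactly for the `i` with `a i = -1`, and `0`
otherwise. -/
def HilbH {n : ℕ} (k : Type) [Field k] (M : Type*) [AddCommGroup M] [Module k M]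
    (a : Fin n → ℤ) (g : (Fin n → ℤ) → Submodule k M) : Prop :=
  ∀ d : Fin n → ℤ, Module.finrank k (g d) =
    if (∀ i, (a i = -1 → d i < 0) ∧ (a i = 0 → 0 ≤ d i)) then 1 else 0

section Aux

variable {n : ℕ} {k : Type} [Field k]

/-- the monomial `x^b`. -/
noncomputable abbrev mon (k : Type) [Field k] {n : ℕ} (b : Fin n → ℕ) :
    MvPolynomial (Fin n) k := ∏ i, X i ^ b i

lemma mon_mul_X {b b' : Fin n → ℕ} {j : Fin n} (h : b j = b' j + 1)
    (h' : ∀ i, i ≠ j → b i = b' i) : (mon k b : MvPolynomial (Fin n) k) = mon k b' * X j := by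
  have key : ∀ i : Fin n, (X i ^ b i : MvPolynomial (Fin n) k)
      = X i ^ b' i * (if i = j then X j else 1) := by
    intro i
    by_cases hij : i = j
    · subst hij; rw [if_pos rfl, h, pow_succ]
    · rw [if_neg hij, h' i hij, mul_one]
  calc (mon k b : MvPolynomial (Fin n) k)
      = ∏ i, (X i ^ b' i * (if i = j then X j else 1)) :=
        Finset.prod_congr rfl (fun i _ => key i)
    _ = mon k b' * ∏ i, (if i = j then (X j : MvPolynomial (Fin n) k) else 1) :=
        Finset.prod_mul_distrib
    _ = mon k b' * X j := by
        rw [Finset.prod_ite_eq' Finset.univ j (fun _ => (X j : MvPolynomial (Fin n) k))]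
        simp

lemma compat_mon {M : Type*} [AddCommGroup M] [Module (MvPolynomial (Fin n) k) M] [Module k M]
    {g : (Fin n → ℤ) → Submodule k M} (hg : GradingCompat k M g) :
    ∀ (N : ℕ) (b : Fin n → ℕ), (∑ i, b i) = N → ∀ (d : Fin n → ℤ) (m : M), m ∈ g d →
      mon k b • m ∈ g (d + fun i => (b i : ℤ)) := by
  intro N
  induction N with
  | zero =>
    intro b hb d m hm
    have hb0 : ∀ i, b i = 0 := by
      intro i
      exact Finset.sum_eq_zero_iff.mp hb i (Finset.mem_univ i)
    have h1 : (mon k b : MvPolynomial (Fin n) k) = 1 := by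
      apply Finset.prod_eq_one; intro i _; rw [hb0 i, pow_zero]
    have h2 : (d + fun i => ((b i : ℤ))) = d := by funext i; simp [hb0 i]
    rw [h1, one_smul, h2]; exact hm
  | succ N ih =>
    intro b hb d m hm
    have hex : ∃ j, b j ≠ 0 := by
      by_contra hc
      push_neg at hc
      simp [hc] at hb
    obtain ⟨j, hj⟩ := hex
    set b' := Function.update b j (b j - 1) with hb'
    have hsplit : ∑ i, b i = b j + ∑ i ∈ Finset.univ.erase j, b i :=
      (Finset.add_sum_erase _ b (Finset.mem_univ j)).symm
    have hsum : ∑ i, b' i = N := by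
      rw [hb', Finset.sum_update_of_mem (Finset.mem_univ j),
        Finset.sdiff_singleton_eq_erase]
      omega
    have hstep := hg j d m hm
    have hrec := ih b' hsum _ _ hstep
    have hmon : (mon k b : MvPolynomial (Fin n) k) = mon k b' * X j :=
      mon_mul_X (by rw [hb', Function.update_self]; omega)
        (fun i hij => by rw [hb', Function.update_of_ne hij])
    have hdeg : (d + Pi.single j 1 + fun i => ((b' i : ℤ))) = d + fun i => ((b i : ℤ)) := by
      funext i
      by_cases hij : i = j
      · subst hij
        simp only [hb', Pi.add_apply, Function.update_self, Pi.single_eq_same]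
        omega
      · simp only [hb', Pi.add_apply, Function.update_of_ne hij, Pi.single_eq_of_ne hij]
        omega
    rw [hmon, mul_smul, ← hdeg]
    exact hrec

variable {M : Type*} [AddCommGroup M] [Module k M]

/-- projection onto the degree-`d` part of an internal grading. -/
noncomputable def gproj (g : (Fin n → ℤ) → Submodule k M) (hI : DirectSum.IsInternal g)
    (d : Fin n → ℤ) : M →ₗ[k] M where
  toFun m := (((LinearEquiv.ofBijective (DirectSum.coeLinearMap g) hI).symm m) d : M)
  map_add' x y := by
    simp only [map_add, DirectSum.add_apply, Submodule.coe_add]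
  map_smul' c x := by
    simp only [map_smul, DirectSum.smul_apply, SetLike.val_smul, RingHom.id_apply]

lemma gproj_mem (g : (Fin n → ℤ) → Submodule k M) (hI : DirectSum.IsInternal g)
    (d : Fin n → ℤ) (m : M) : gproj g hI d m ∈ g d := Submodule.coe_mem _

lemma gproj_eq_same {g : (Fin n → ℤ) → Submodule k M} (hI : DirectSum.IsInternal g)
    {d : Fin n → ℤ} {m : M} (hm : m ∈ g d) : gproj g hI d m = m := by
  show (((LinearEquiv.ofBijective (DirectSum.coeLinearMap g) hI).symm m) d : M) = m
  rw [hI.ofBijective_coeLinearMap_of_mem hm]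

lemma gproj_eq_ne {g : (Fin n → ℤ) → Submodule k M} (hI : DirectSum.IsInternal g)
    {c d : Fin n → ℤ} {m : M} (hm : m ∈ g c) (hcd : c ≠ d) : gproj g hI d m = 0 := by
  show (((LinearEquiv.ofBijective (DirectSum.coeLinearMap g) hI).symm m) d : M) = 0
  rw [hI.ofBijective_coeLinearMap_of_mem_ne hcd hm]
  rfl

lemma ext_on_graded {N : Type*} [AddCommGroup N] [Module k N]
    {g : (Fin n → ℤ) → Submodule k M} (hTop : iSup g = ⊤)
    {f f' : M →ₗ[k] N} (h : ∀ d, ∀ m ∈ g d, f m = f' m) (m : M) : f m = f' m := by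
  have hle : (⊤ : Submodule k M) ≤ LinearMap.eqLocus f f' := by
    rw [← hTop]
    apply iSup_le
    intro d x hx
    exact h d x hx
  exact hle Submodule.mem_top

lemma gproj_comm {N : Type*} [AddCommGroup N] [Module k N]
    (gM : (Fin n → ℤ) → Submodule k M) (gN : (Fin n → ℤ) → Submodule k N)
    (hM : DirectSum.IsInternal gM) (hN : DirectSum.IsInternal gN)
    (f : M →ₗ[k] N) (hf : ∀ d, ∀ m ∈ gM d, f m ∈ gN d) (d : Fin n → ℤ) (m : M) :
    gproj gN hN d (f m) = f (gproj gM hM d m) := by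
  refine ext_on_graded (hM.submodule_iSup_eq_top)
    (f := (gproj gN hN d) ∘ₗ f) (f' := f ∘ₗ gproj gM hM d) ?_ m
  intro c x hx
  by_cases hcd : c = d
  · subst hcd
    simp only [LinearMap.comp_apply]
    rw [gproj_eq_same hN (hf c x hx), gproj_eq_same hM hx]
  · simp only [LinearMap.comp_apply]
    rw [gproj_eq_ne hN (hf c x hx) hcd, gproj_eq_ne hM hx hcd, map_zero]

lemma exists_smul_eq_of_finrank_one {V : Type*} [AddCommGroup V] [Module k V]
    [Module.Finite k V] (h1 : Module.finrank k V = 1) {x : V} (hx : x ≠ 0) (w : V) :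
    ∃ c : k, c • x = w := by
  have hspan : Submodule.span k {x} = ⊤ := by
    apply Submodule.eq_top_of_finrank_eq
    rw [finrank_span_singleton hx, h1]
  have hw : w ∈ Submodule.span k {x} := hspan ▸ Submodule.mem_top
  exact Submodule.mem_span_singleton.mp hw

/-- support condition for the grading of `H^{|a|}_{p_a}`. -/
abbrev suppC {n : ℕ} (a d : Fin n → ℤ) : Prop :=
  ∀ i, (a i = -1 → d i < 0) ∧ (a i = 0 → 0 ≤ d i)

abbrev dstar {n : ℕ} (a : Fin n → ℤ) : Fin n → ℤ := fun i => if a i = -1 then -1 else 0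

abbrev uExp {n : ℕ} (a d : Fin n → ℤ) : Fin n → ℕ :=
  fun i => if a i = 0 then (d i).toNat else 0

abbrev vExp {n : ℕ} (a d : Fin n → ℤ) : Fin n → ℕ :=
  fun i => if a i = -1 then (-1 - d i).toNat else 0

lemma suppC_dstar {a : Fin n → ℤ} : suppC a (dstar a) := by
  intro i
  constructor <;> intro h <;> simp [dstar, h]

lemma deg_eq {a d : Fin n → ℤ} (ha : isOm a) (hd : suppC a d) :
    (d + fun i => ((vExp a d i : ℤ))) = (dstar a + fun i => ((uExp a d i : ℤ))) := by
  funext i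
  rcases ha i with h0 | h1
  · have := (hd i).2 h0
    simp only [Pi.add_apply, vExp, uExp, dstar, h0]
    norm_num
    omega
  · have := (hd i).1 h1
    simp only [Pi.add_apply, vExp, uExp, dstar, h1]
    norm_num
    omega

lemma suppC_add_v {a d : Fin n → ℤ} (hd : suppC a d) :
    suppC a (d + fun i => ((vExp a d i : ℤ))) := by
  intro i
  constructor <;> intro h
  · have := (hd i).1 h
    simp only [Pi.add_apply, vExp, h, if_pos]
    omega
  · have := (hd i).2 h
    have h1 : ¬ (a i = -1) := by rw [h]; decide
    simp only [Pi.add_apply, vExp, if_neg h1]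
    omega

lemma cond_v {a d : Fin n → ℤ} (ha : isOm a) (hd : suppC a d) :
    ∀ i, d i < 0 → d i + (vExp a d i : ℤ) < 0 := by
  intro i hi
  rcases ha i with h0 | h1
  · exact absurd ((hd i).2 h0) (by omega)
  · simp only [vExp, h1, if_pos]
    omega

lemma cond_u {a : Fin n → ℤ} (d : Fin n → ℤ) :
    ∀ i, dstar a i < 0 → dstar a i + (uExp a d i : ℤ) < 0 := by
  intro i hi
  by_cases h : a i = -1
  · have h2 : ¬ (a i = 0) := by rw [h]; decide
    simp only [dstar, uExp, if_pos h, if_neg h2]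
    decide
  · simp only [dstar, if_neg h] at hi
    omega

lemma offsupp_b {a b : Fin n → ℤ} (ha : isOm a) (hb : isOm b) (hw : wt a = wt b)
    {d : Fin n → ℤ} {i : Fin n}
    (hSd : suppC a d)
    (hnot : ¬ suppC a (d + Pi.single i 1)) :
    ¬ suppC b (d + Pi.single i 1) := by
  intro hSb
  have hai : a i = -1 ∧ d i = -1 := by
    by_contra hc
    apply hnot
    intro j
    by_cases hji : j = i
    · subst hji
      constructor
      · intro haj
        have hdj := (hSd j).1 haj
        have hne : d j ≠ -1 := fun h => hc ⟨haj, h⟩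
        simp only [Pi.add_apply, Pi.single_eq_same]
        omega
      · intro haj
        have := (hSd j).2 haj
        simp only [Pi.add_apply, Pi.single_eq_same]
        omega
    · constructor
      · intro haj
        have := (hSd j).1 haj
        simp only [Pi.add_apply, Pi.single_eq_of_ne hji]
        omega
      · intro haj
        have := (hSd j).2 haj
        simp only [Pi.add_apply, Pi.single_eq_of_ne hji]
        omega
  obtain ⟨hai1, hdi⟩ := hai
  have hsub : (Finset.univ.filter fun j => b j = -1)
      ⊆ (Finset.univ.filter fun j => a j = -1).erase i := by
    intro j hj
    rw [Finset.mem_filter] at hj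
    have hbj := hj.2
    have hdj' : (d + Pi.single i 1 : Fin n → ℤ) j < 0 := (hSb j).1 hbj
    have hji : j ≠ i := by
      intro h; subst h
      rw [Pi.add_apply, Pi.single_eq_same, hdi] at hdj'
      omega
    rw [Pi.add_apply, Pi.single_eq_of_ne hji] at hdj'
    have haj : a j = -1 := by
      rcases ha j with h0 | h1
      · exact absurd ((hSd j).2 h0) (by simpa using hdj')
      · exact h1
    exact Finset.mem_erase.mpr ⟨hji, Finset.mem_filter.mpr ⟨Finset.mem_univ j, haj⟩⟩
  have hcard := Finset.card_le_card hsub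
  rw [Finset.card_erase_of_mem (Finset.mem_filter.mpr ⟨Finset.mem_univ i, hai1⟩)] at hcard
  have h1 : 0 < (Finset.univ.filter fun j => a j = -1).card :=
    Finset.card_pos.mpr ⟨i, Finset.mem_filter.mpr ⟨Finset.mem_univ i, hai1⟩⟩
  unfold wt at hw
  omega

end Aux

/-- Vanishing of the graded Ext group `*Ext¹_R(H^l_{p_a}(R), H^l_{p_b}(R))` for
`a, b ∈ {-1,0}ⁿ` with `|a| = |b| = l`:  every extension of `ℤⁿ`-graded modules
`0 → H^l_{p_b}(R) → E → H^l_{p_a}(R) → 0` (with degree-preserving maps) admits a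
degree-preserving `R`-linear splitting.  The graded modules `H^l_{p_a}(R)`, `H^l_{p_b}(R)`
are encoded as modules isomorphic to the corresponding local cohomology modules, equipped
with their canonical (`ε`-straight) gradings. -/
theorem stmt_14 (n : ℕ) (k : Type) [Field k] (a b : Fin n → ℤ)
    (ha : isOm a) (hb : isOm b) (l : ℕ) (hwa : wt a = l) (hwb : wt b = l)
    (MA : Type) [AddCommGroup MA] [Module (MvPolynomial (Fin n) k) MA] [Module k MA]
    [IsScalarTower k (MvPolynomial (Fin n) k) MA]
    (MB : Type) [AddCommGroup MB] [Module (MvPolynomial (Fin n) k) MB] [Module k MB]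
    [IsScalarTower k (MvPolynomial (Fin n) k) MB]
    (eA : MA ≃ₗ[MvPolynomial (Fin n) k] LC k (faceIdeal k a) l)
    (eB : MB ≃ₗ[MvPolynomial (Fin n) k] LC k (faceIdeal k b) l)
    (gA : (Fin n → ℤ) → Submodule k MA) (hgA : IsEpsStraight k MA gA)
    (hhA : HilbH k MA a gA)
    (gB : (Fin n → ℤ) → Submodule k MB) (hgB : IsEpsStraight k MB gB)
    (hhB : HilbH k MB b gB)
    -- an arbitrary graded extension `0 → MB → E → MA → 0`
    (E : Type) [AddCommGroup E] [Module (MvPolynomial (Fin n) k) E] [Module k E]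
    [IsScalarTower k (MvPolynomial (Fin n) k) E]
    (gE : (Fin n → ℤ) → Submodule k E)
    (hgE : DirectSum.IsInternal gE ∧ GradingCompat k E gE)
    (ι : MB →ₗ[MvPolynomial (Fin n) k] E) (π : E →ₗ[MvPolynomial (Fin n) k] MA)
    (hι : Function.Injective ι) (hπ : Function.Surjective π)
    (hexact : LinearMap.range ι = LinearMap.ker π)
    (hιgr : ∀ d : Fin n → ℤ, ∀ m ∈ gB d, ι m ∈ gE d)
    (hπgr : ∀ d : Fin n → ℤ, ∀ m ∈ gE d, π m ∈ gA d) :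
    -- the extension splits by a graded section
    ∃ σ : MA →ₗ[MvPolynomial (Fin n) k] E,
      π.comp σ = LinearMap.id ∧ ∀ d : Fin n → ℤ, ∀ m ∈ gA d, σ m ∈ gE d := by
  classical
  obtain ⟨hIA, hCA, hFA, hSA⟩ := hgA
  obtain ⟨hIB, hCB, hFB, hSB⟩ := hgB
  obtain ⟨hIE, hCE⟩ := hgE
  haveI : SMulCommClass (MvPolynomial (Fin n) k) k MA := SMulCommClass.symm _ _ _
  haveI : SMulCommClass (MvPolynomial (Fin n) k) k E := SMulCommClass.symm _ _ _
  haveI : SMulCommClass (MvPolynomial (Fin n) k) k MB := SMulCommClass.symm _ _ _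
  -- vanishing off the support
  have hAvanish : ∀ d, ¬ suppC a d → ∀ m ∈ gA d, m = 0 := by
    intro d hd m hm
    have h0 : Module.finrank k (gA d) = 0 := by
      have := hhA d; rwa [if_neg hd] at this
    haveI := hFA d
    have hbot : gA d = ⊥ := Submodule.finrank_eq_zero.mp h0
    rw [hbot] at hm
    simpa using hm
  have hBvanish : ∀ d, ¬ suppC b d → ∀ m ∈ gB d, m = 0 := by
    intro d hd m hm
    have h0 : Module.finrank k (gB d) = 0 := by
      have := hhB d; rwa [if_neg hd] at this
    haveI := hFB d
    have hbot : gB d = ⊥ := Submodule.finrank_eq_zero.mp h0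
    rw [hbot] at hm
    simpa using hm
  -- homogeneous lifting along π
  have hAlift : ∀ d, ∀ m ∈ gA d, ∃ e ∈ gE d, π e = m := by
    intro d m hm
    obtain ⟨e0, he0⟩ := hπ m
    refine ⟨gproj gE hIE d e0, gproj_mem _ _ _ _, ?_⟩
    have hcomm : gproj gA hIA d (π e0) = π (gproj gE hIE d e0) :=
      gproj_comm gE gA hIE hIA (π.restrictScalars k) hπgr d e0
    rw [he0, gproj_eq_same hIA hm] at hcomm
    exact hcomm.symm
  -- homogeneous kernel elements come from gB
  have hBker : ∀ d, ∀ e ∈ gE d, π e = 0 → ∃ mb ∈ gB d, ι mb = e := by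
    intro d e he hpe
    have hrange : e ∈ LinearMap.range ι := hexact ▸ (LinearMap.mem_ker.mpr hpe)
    obtain ⟨mb0, hmb0⟩ := hrange
    refine ⟨gproj gB hIB d mb0, gproj_mem _ _ _ _, ?_⟩
    have hcomm : gproj gE hIE d (ι mb0) = ι (gproj gB hIB d mb0) :=
      gproj_comm gB gE hIB hIE (ι.restrictScalars k) hιgr d mb0
    rw [hmb0, gproj_eq_same hIE he] at hcomm
    exact hcomm.symm
  -- straightness of E : injectivity
  have hEinj : ∀ (bb : Fin n → ℕ) (dd : Fin n → ℤ), (∀ i, dd i < 0 → dd i + (bb i : ℤ) < 0) →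
      ∀ z ∈ gE dd, (mon k bb) • z = 0 → z = 0 := by
    intro bb dd hcond z hz h0
    have hπz : π z ∈ gA dd := hπgr dd z hz
    have h1 : (mon k bb) • π z = 0 := by rw [← map_smul, h0, map_zero]
    have h2 : π z = 0 := (hSA bb dd hcond).1 (π z) hπz h1
    obtain ⟨mb, hmb, hmbe⟩ := hBker dd z hz h2
    have h3 : ι ((mon k bb) • mb) = 0 := by rw [map_smul, hmbe, h0]
    have h4 : (mon k bb) • mb = 0 := by
      apply hι; rw [h3, map_zero]
    have h5 : mb = 0 := (hSB bb dd hcond).1 mb hmb h4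
    rw [← hmbe, h5, map_zero]
  -- straightness of E : surjectivity
  have hEsurj : ∀ (bb : Fin n → ℕ) (dd : Fin n → ℤ), (∀ i, dd i < 0 → dd i + (bb i : ℤ) < 0) →
      ∀ z ∈ gE (dd + fun i => (bb i : ℤ)), ∃ y ∈ gE dd, (mon k bb) • y = z := by
    intro bb dd hcond z hz
    have hπz : π z ∈ gA (dd + fun i => (bb i : ℤ)) := hπgr _ z hz
    obtain ⟨y1, hy1, hy1e⟩ := (hSA bb dd hcond).2 (π z) hπz
    obtain ⟨e1, he1, he1e⟩ := hAlift dd y1 hy1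
    have hw : z - mon k bb • e1 ∈ gE (dd + fun i => (bb i : ℤ)) :=
      Submodule.sub_mem _ hz (compat_mon hCE _ bb rfl dd e1 he1)
    have hπw : π (z - mon k bb • e1) = 0 := by
      rw [map_sub, map_smul, he1e, hy1e, sub_self]
    obtain ⟨mb, hmb, hmbe⟩ := hBker _ _ hw hπw
    obtain ⟨y2, hy2, hy2e⟩ := (hSB bb dd hcond).2 mb hmb
    refine ⟨e1 + ι y2, Submodule.add_mem _ he1 (hιgr dd y2 hy2), ?_⟩
    rw [smul_add, ← map_smul, hy2e, hmbe]
    abel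
  -- the corner degree and corner generators
  have h1A : Module.finrank k (gA (dstar a)) = 1 := by
    have := hhA (dstar a); rwa [if_pos suppC_dstar] at this
  have hms : ∃ ms : MA, ms ∈ gA (dstar a) ∧ ms ≠ 0 := by
    haveI := hFA (dstar a)
    by_contra hc
    push_neg at hc
    have hbot : gA (dstar a) = ⊥ := by
      rw [Submodule.eq_bot_iff]
      exact fun x hx => hc x hx
    rw [hbot] at h1A
    simp [finrank_bot] at h1A
  obtain ⟨ms, hms, hms0⟩ := hms
  obtain ⟨es, hes, hesπ⟩ := hAlift (dstar a) ms hms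
  have hune : ∀ d : Fin n → ℤ, mon k (uExp a d) • ms ≠ 0 := by
    intro d h
    exact hms0 ((hSA (uExp a d) (dstar a) (cond_u d)).1 ms hms h)
  -- degreewise construction of the section
  have exist : ∀ d : Fin n → ℤ, ∃ s : gA d →ₗ[k] E,
      (∀ m : gA d, s m ∈ gE d) ∧
      (∀ m : gA d, π (s m) = (m : MA)) ∧
      (∀ m : gA d, ∃ c : k,
        mon k (vExp a d) • (m : MA) = c • (mon k (uExp a d) • ms) ∧
        mon k (vExp a d) • (s m) = c • (mon k (uExp a d) • es)) := by
    intro d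
    by_cases hSd : suppC a d
    case neg =>
      refine ⟨0, ?_, ?_, ?_⟩
      · intro m; simp
      · intro m
        have hm0 : (m : MA) = 0 := hAvanish d hSd m m.2
        simp [hm0]
      · intro m
        have hm0 : (m : MA) = 0 := hAvanish d hSd m m.2
        exact ⟨0, by simp [hm0], by simp⟩
    case pos =>
      have hdeq : (d + fun i => ((vExp a d i : ℤ)))
          = (dstar a + fun i => ((uExp a d i : ℤ))) := deg_eq ha hSd
      have hcondv : ∀ i, d i < 0 → d i + (vExp a d i : ℤ) < 0 := cond_v ha hSd
      have hxA : mon k (uExp a d) • ms ∈ gA (d + fun i => ((vExp a d i : ℤ))) := by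
        rw [hdeq]; exact compat_mon hCA _ (uExp a d) rfl _ ms hms
      have hxE : mon k (uExp a d) • es ∈ gE (d + fun i => ((vExp a d i : ℤ))) := by
        rw [hdeq]; exact compat_mon hCE _ (uExp a d) rfl _ es hes
      have hSdv : suppC a (d + fun i => ((vExp a d i : ℤ))) := suppC_add_v hSd
      have h1dv : Module.finrank k (gA (d + fun i => ((vExp a d i : ℤ)))) = 1 := by
        have := hhA (d + fun i => ((vExp a d i : ℤ))); rwa [if_pos hSdv] at this
      haveI := hFA (d + fun i => ((vExp a d i : ℤ)))
      let mulA : gA d →ₗ[k] gA (d + fun i => ((vExp a d i : ℤ))) :=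
        { toFun := fun m => ⟨mon k (vExp a d) • (m : MA),
            compat_mon hCA _ (vExp a d) rfl d m m.2⟩
          map_add' := fun x y => by
            apply Subtype.ext
            simp [smul_add]
          map_smul' := fun c x => by
            apply Subtype.ext
            show mon k (vExp a d) • ((c • x : gA d) : MA) = _
            rw [SetLike.val_smul, smul_comm]
            rfl }
      have hmulAbij : Function.Bijective mulA := by
        constructor
        · intro x y hxy
          have h1 : mon k (vExp a d) • ((x : MA) - y) = 0 := by
            have := congrArg Subtype.val hxy
            simp only [mulA, LinearMap.coe_mk, AddHom.coe_mk] at this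
            rw [smul_sub, this, sub_self]
          have h2 : ((x : MA) - y) = 0 :=
            (hSA (vExp a d) d hcondv).1 _ (Submodule.sub_mem _ x.2 y.2) h1
          exact Subtype.ext (by rwa [sub_eq_zero] at h2)
        · intro z
          obtain ⟨y, hy, hyz⟩ := (hSA (vExp a d) d hcondv).2 (z : MA) z.2
          exact ⟨⟨y, hy⟩, Subtype.ext hyz⟩
      let mulE : gE d →ₗ[k] gE (d + fun i => ((vExp a d i : ℤ))) :=
        { toFun := fun m => ⟨mon k (vExp a d) • (m : E),
            compat_mon hCE _ (vExp a d) rfl d m m.2⟩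
          map_add' := fun x y => by
            apply Subtype.ext
            simp [smul_add]
          map_smul' := fun c x => by
            apply Subtype.ext
            show mon k (vExp a d) • ((c • x : gE d) : E) = _
            rw [SetLike.val_smul, smul_comm]
            rfl }
      have hmulEbij : Function.Bijective mulE := by
        constructor
        · intro x y hxy
          have h1 : mon k (vExp a d) • ((x : E) - y) = 0 := by
            have := congrArg Subtype.val hxy
            simp only [mulE, LinearMap.coe_mk, AddHom.coe_mk] at this
            rw [smul_sub, this, sub_self]
          have h2 : ((x : E) - y) = 0 :=
            hEinj (vExp a d) d hcondv _ (Submodule.sub_mem _ x.2 y.2) h1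
          exact Subtype.ext (by rwa [sub_eq_zero] at h2)
        · intro z
          obtain ⟨y, hy, hyz⟩ := hEsurj (vExp a d) d hcondv (z : E) z.2
          exact ⟨⟨y, hy⟩, Subtype.ext hyz⟩
      let φ : k →ₗ[k] gA (d + fun i => ((vExp a d i : ℤ))) :=
        LinearMap.toSpanSingleton k _ ⟨mon k (uExp a d) • ms, hxA⟩
      have hφbij : Function.Bijective φ := by
        constructor
        · intro c c' hcc
          have h1 : c • (mon k (uExp a d) • ms) = c' • (mon k (uExp a d) • ms) := by
            have := congrArg Subtype.val hcc
            simpa [φ, LinearMap.toSpanSingleton_apply] using this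
          have h0 : (c - c') • (mon k (uExp a d) • ms) = 0 := by
            rw [sub_smul, h1, sub_self]
          rcases smul_eq_zero.mp h0 with h | h
          · exact sub_eq_zero.mp h
          · exact absurd h (hune d)
        · intro w
          have hxne : (⟨mon k (uExp a d) • ms, hxA⟩ :
              gA (d + fun i => ((vExp a d i : ℤ)))) ≠ 0 := by
            intro h
            exact (hune d) (by simpa using congrArg Subtype.val h)
          obtain ⟨c, hc⟩ := exists_smul_eq_of_finrank_one h1dv hxne w
          exact ⟨c, by simpa [φ, LinearMap.toSpanSingleton_apply] using hc⟩
      let eqA' := LinearEquiv.ofBijective mulA hmulAbij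
      let eqE' := LinearEquiv.ofBijective mulE hmulEbij
      let eqφ := LinearEquiv.ofBijective φ hφbij
      let ψ : k →ₗ[k] gE (d + fun i => ((vExp a d i : ℤ))) :=
        LinearMap.toSpanSingleton k _ ⟨mon k (uExp a d) • es, hxE⟩
      set s : gA d →ₗ[k] E := (gE d).subtype ∘ₗ
        (eqE'.symm.toLinearMap ∘ₗ (ψ ∘ₗ (eqφ.symm.toLinearMap ∘ₗ eqA'.toLinearMap))) with hsdef
      have hmem : ∀ m : gA d, s m ∈ gE d := fun m => Submodule.coe_mem _
      have hchar : ∀ m : gA d, ∃ c : k,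
          mon k (vExp a d) • (m : MA) = c • (mon k (uExp a d) • ms) ∧
          mon k (vExp a d) • (s m) = c • (mon k (uExp a d) • es) := by
        intro m
        refine ⟨eqφ.symm (eqA' m), ?_, ?_⟩
        · have h1 : φ (eqφ.symm (eqA' m)) = eqA' m := eqφ.apply_symm_apply _
          have h2 := congrArg Subtype.val h1
          simp only [φ, LinearMap.toSpanSingleton_apply] at h2
          calc mon k (vExp a d) • (m : MA) = ((eqA' m : gA _) : MA) := rfl
            _ = (eqφ.symm (eqA' m)) • (mon k (uExp a d) • ms) := by
                rw [← h2]; simp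
        · have h1 : mulE (eqE'.symm (ψ (eqφ.symm (eqA' m)))) = ψ (eqφ.symm (eqA' m)) :=
            eqE'.apply_symm_apply _
          have h2 := congrArg Subtype.val h1
          simp only [mulE, LinearMap.coe_mk, AddHom.coe_mk] at h2
          calc mon k (vExp a d) • (s m)
              = mon k (vExp a d) • ((eqE'.symm (ψ (eqφ.symm (eqA' m))) : gE d) : E) := rfl
            _ = ((ψ (eqφ.symm (eqA' m)) : gE _) : E) := h2
            _ = (eqφ.symm (eqA' m)) • (mon k (uExp a d) • es) := by
                simp [ψ, LinearMap.toSpanSingleton_apply]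
      have hpi : ∀ m : gA d, π (s m) = (m : MA) := by
        intro m
        obtain ⟨c, hc1, hc2⟩ := hchar m
        have h1 : mon k (vExp a d) • (π (s m) - (m : MA)) = 0 := by
          rw [smul_sub, ← map_smul, hc2, LinearMap.map_smul_of_tower, map_smul, hesπ,
            ← hc1, sub_self]
        have h2 := (hSA (vExp a d) d hcondv).1 _
          (Submodule.sub_mem _ (hπgr d _ (hmem m)) m.2) h1
        rwa [sub_eq_zero] at h2
      exact ⟨s, hmem, hpi, hchar⟩
  choose σd hσmem hσπ hσchar using exist
  -- compatibility of the section with multiplication by the variables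
  have hcompat : ∀ (d : Fin n → ℤ) (i : Fin n) (m : MA) (hm : m ∈ gA d)
      (hm' : (X i : MvPolynomial (Fin n) k) • m ∈ gA (d + Pi.single i 1)),
      σd (d + Pi.single i 1) ⟨(X i : MvPolynomial (Fin n) k) • m, hm'⟩
        = (X i : MvPolynomial (Fin n) k) • σd d ⟨m, hm⟩ := by
    intro d i m hm hm'
    by_cases hSd : suppC a d
    case neg =>
      have hm0 : m = 0 := hAvanish d hSd m hm
      subst hm0
      have hz1 : (⟨(X i : MvPolynomial (Fin n) k) • (0:MA), hm'⟩ :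
          gA (d + Pi.single i 1)) = 0 := by
        apply Subtype.ext; simp
      have hz2 : (⟨(0:MA), hm⟩ : gA d) = 0 := by
        apply Subtype.ext; rfl
      rw [hz1, hz2, map_zero, map_zero, smul_zero]
    case pos =>
    by_cases hSd' : suppC a (d + Pi.single i 1)
    case neg =>
      have hXm0 : (X i : MvPolynomial (Fin n) k) • m = 0 := hAvanish _ hSd' _ hm'
      have hz : (⟨(X i : MvPolynomial (Fin n) k) • m, hm'⟩ : gA (d + Pi.single i 1)) = 0 :=
        Subtype.ext hXm0
      rw [hz, map_zero]
      have hsmem := hσmem d ⟨m, hm⟩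
      have hXs : (X i : MvPolynomial (Fin n) k) • σd d ⟨m, hm⟩ ∈ gE (d + Pi.single i 1) :=
        hCE i d _ hsmem
      have hπXs : π ((X i : MvPolynomial (Fin n) k) • σd d ⟨m, hm⟩) = 0 :=
        hAvanish _ hSd' _ (hπgr _ _ hXs)
      obtain ⟨mb, hmb, hmbe⟩ := hBker _ _ hXs hπXs
      have hbnot : ¬ suppC b (d + Pi.single i 1) :=
        offsupp_b ha hb (by rw [hwa, hwb]) hSd hSd'
      have hmb0 : mb = 0 := hBvanish _ hbnot mb hmb
      rw [hmb0, map_zero] at hmbe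
      exact hmbe
    case pos =>
      obtain ⟨c, hc1, hc2⟩ := hσchar d ⟨m, hm⟩
      obtain ⟨c', hc1', hc2'⟩ := hσchar (d + Pi.single i 1)
        ⟨(X i : MvPolynomial (Fin n) k) • m, hm'⟩
      have hsmem := hσmem d ⟨m, hm⟩
      have hXs : (X i : MvPolynomial (Fin n) k) • σd d ⟨m, hm⟩ ∈ gE (d + Pi.single i 1) :=
        hCE i d _ hsmem
      -- key monomial computations, by cases on `a i`
      have key : mon k (vExp a (d + Pi.single i 1)) • ((X i : MvPolynomial (Fin n) k) • m)
            = c • (mon k (uExp a (d + Pi.single i 1)) • ms) ∧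
          mon k (vExp a (d + Pi.single i 1)) •
              ((X i : MvPolynomial (Fin n) k) • σd d ⟨m, hm⟩)
            = c • (mon k (uExp a (d + Pi.single i 1)) • es) := by
        rcases ha i with hai0 | hai1
        · -- a i = 0
          have hvv : vExp a (d + Pi.single i 1) = vExp a d := by
            funext j
            by_cases hji : j = i
            · subst hji; simp [vExp, hai0]
            · simp [vExp, Pi.single_eq_of_ne hji]
          have huu : mon k (uExp a (d + Pi.single i 1))
              = (mon k (uExp a d) * X i : MvPolynomial (Fin n) k) := by
            apply mon_mul_X
            · have hd0 : 0 ≤ d i := (hSd i).2 hai0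
              simp only [uExp, hai0, if_pos, Pi.add_apply, Pi.single_eq_same]
              omega
            · intro j hji
              simp only [uExp, Pi.add_apply, Pi.single_eq_of_ne hji, add_zero]
          constructor
          · calc mon k (vExp a (d + Pi.single i 1)) • ((X i : MvPolynomial (Fin n) k) • m)
                = (X i : MvPolynomial (Fin n) k) • (mon k (vExp a d) • m) := by
                  rw [hvv, smul_smul, smul_smul, mul_comm]
              _ = (X i : MvPolynomial (Fin n) k) • (c • (mon k (uExp a d) • ms)) := by
                  rw [hc1]
              _ = c • (mon k (uExp a (d + Pi.single i 1)) • ms) := by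
                  rw [huu, smul_comm, smul_smul, mul_comm]
          · calc mon k (vExp a (d + Pi.single i 1)) •
                  ((X i : MvPolynomial (Fin n) k) • σd d ⟨m, hm⟩)
                = (X i : MvPolynomial (Fin n) k) • (mon k (vExp a d) • σd d ⟨m, hm⟩) := by
                  rw [hvv, smul_smul, smul_smul, mul_comm]
              _ = (X i : MvPolynomial (Fin n) k) • (c • (mon k (uExp a d) • es)) := by
                  rw [hc2]
              _ = c • (mon k (uExp a (d + Pi.single i 1)) • es) := by
                  rw [huu, smul_comm, smul_smul, mul_comm]
        · -- a i = -1
          have huu : uExp a (d + Pi.single i 1) = uExp a d := by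
            funext j
            by_cases hji : j = i
            · subst hji; simp [uExp, hai1]
            · simp [uExp, Pi.single_eq_of_ne hji]
          have hvv : mon k (vExp a d)
              = (mon k (vExp a (d + Pi.single i 1)) * X i : MvPolynomial (Fin n) k) := by
            apply mon_mul_X
            · have hd1 : (d + Pi.single i 1 : Fin n → ℤ) i < 0 := (hSd' i).1 hai1
              simp only [Pi.add_apply, Pi.single_eq_same] at hd1
              simp only [vExp, hai1, if_pos, Pi.add_apply, Pi.single_eq_same]
              omega
            · intro j hji
              simp only [vExp, Pi.add_apply, Pi.single_eq_of_ne hji, add_zero]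
          constructor
          · calc mon k (vExp a (d + Pi.single i 1)) • ((X i : MvPolynomial (Fin n) k) • m)
                = mon k (vExp a d) • m := by rw [hvv, mul_smul]
              _ = c • (mon k (uExp a (d + Pi.single i 1)) • ms) := by rw [hc1, huu]
          · calc mon k (vExp a (d + Pi.single i 1)) •
                  ((X i : MvPolynomial (Fin n) k) • σd d ⟨m, hm⟩)
                = mon k (vExp a d) • σd d ⟨m, hm⟩ := by rw [hvv, mul_smul]
              _ = c • (mon k (uExp a (d + Pi.single i 1)) • es) := by rw [hc2, huu]
      -- conclude c' = c
      have hcc : c' = c := by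
        have h0 : (c' - c) • (mon k (uExp a (d + Pi.single i 1)) • ms) = 0 := by
          rw [sub_smul, ← hc1', key.1, sub_self]
        rcases smul_eq_zero.mp h0 with h | h
        · exact sub_eq_zero.mp h
        · exact absurd h (hune _)
      -- conclude by injectivity of multiplication by x^{v} on E
      have h0 : mon k (vExp a (d + Pi.single i 1)) •
          (σd (d + Pi.single i 1) ⟨(X i : MvPolynomial (Fin n) k) • m, hm'⟩
            - (X i : MvPolynomial (Fin n) k) • σd d ⟨m, hm⟩) = 0 := by
        rw [smul_sub, hc2', hcc, key.2, sub_self]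
      have h2 := hEinj (vExp a (d + Pi.single i 1)) (d + Pi.single i 1)
        (cond_v ha hSd') _
        (Submodule.sub_mem _ (hσmem _ _) hXs) h0
      rwa [sub_eq_zero] at h2
  -- assemble the global k-linear section
  let eqDS : DirectSum (Fin n → ℤ) (fun d => ↥(gA d)) ≃ₗ[k] MA :=
    LinearEquiv.ofBijective (DirectSum.coeLinearMap gA) hIA
  let σ0 : MA →ₗ[k] E := (DirectSum.toModule k (Fin n → ℤ) E σd) ∘ₗ eqDS.symm.toLinearMap
  have hσ0homog : ∀ (d : Fin n → ℤ) (m : MA) (hm : m ∈ gA d), σ0 m = σd d ⟨m, hm⟩ := by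
    intro d m hm
    have h1 : eqDS.symm m = DirectSum.lof k (Fin n → ℤ) (fun e => ↥(gA e)) d ⟨m, hm⟩ := by
      rw [LinearEquiv.symm_apply_eq, DirectSum.lof_eq_of]
      exact (DirectSum.coeLinearMap_of gA d ⟨m, hm⟩).symm
    show (DirectSum.toModule k (Fin n → ℤ) E σd) (eqDS.symm m) = _
    rw [h1, DirectSum.toModule_lof]
  have hσ0mem : ∀ (d : Fin n → ℤ), ∀ m ∈ gA d, σ0 m ∈ gE d := by
    intro d m hm
    rw [hσ0homog d m hm]
    exact hσmem d _
  have hTopA : iSup gA = ⊤ := hIA.submodule_iSup_eq_top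
  have hπσ0 : ∀ m : MA, π (σ0 m) = m := by
    intro m
    refine ext_on_graded hTopA (f := (π.restrictScalars k) ∘ₗ σ0) (f' := LinearMap.id) ?_ m
    intro d x hx
    show π (σ0 x) = x
    rw [hσ0homog d x hx]
    exact hσπ d ⟨x, hx⟩
  have hX : ∀ (i : Fin n) (m : MA),
      σ0 ((X i : MvPolynomial (Fin n) k) • m) = (X i : MvPolynomial (Fin n) k) • σ0 m := by
    intro i m
    refine ext_on_graded hTopA
      (f := σ0 ∘ₗ ((LinearMap.lsmul (MvPolynomial (Fin n) k) MA (X i)).restrictScalars k))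
      (f' := ((LinearMap.lsmul (MvPolynomial (Fin n) k) E (X i)).restrictScalars k) ∘ₗ σ0)
      ?_ m
    intro d x hx
    show σ0 ((X i : MvPolynomial (Fin n) k) • x) = (X i : MvPolynomial (Fin n) k) • σ0 x
    have hx' : (X i : MvPolynomial (Fin n) k) • x ∈ gA (d + Pi.single i 1) := hCA i d x hx
    rw [hσ0homog _ _ hx', hσ0homog d x hx]
    exact hcompat d i x hx hx'
  have hsmul : ∀ (p : MvPolynomial (Fin n) k) (m : MA), σ0 (p • m) = p • σ0 m := by
    intro p
    induction p using MvPolynomial.induction_on with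
    | C c =>
      intro m
      have h1 : (C c : MvPolynomial (Fin n) k) • m = c • m := by
        rw [← MvPolynomial.algebraMap_eq, algebraMap_smul]
      have h2 : (C c : MvPolynomial (Fin n) k) • (σ0 m) = c • σ0 m := by
        rw [← MvPolynomial.algebraMap_eq, algebraMap_smul]
      rw [h1, h2, map_smul]
    | add p q hp hq =>
      intro m
      rw [add_smul, map_add, hp, hq, add_smul]
    | mul_X p i hp =>
      intro m
      calc σ0 ((p * X i) • m) = σ0 (p • ((X i : MvPolynomial (Fin n) k) • m)) := by
            rw [mul_smul]
        _ = p • σ0 ((X i : MvPolynomial (Fin n) k) • m) := hp _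
        _ = p • ((X i : MvPolynomial (Fin n) k) • σ0 m) := by rw [hX]
        _ = (p * X i) • σ0 m := by rw [← mul_smul]
  refine ⟨{ toFun := σ0, map_add' := map_add σ0, map_smul' := fun p m => hsmul p m }, ?_, ?_⟩
  · apply LinearMap.ext
    intro m
    exact hπσ0 m
  · intro d m hm
    exact hσ0mem d m hm
end

section
/- Let R = k[x_1,...,x_n] and let p, q ⊆ R be homogeneous (monomial) prime ideals with height(p) = j, height(q) = l and l ≤ j - 2. Then *Ext^1_R(H^j_p(R), H^l_q(R)) = 0 in the category of Z^n-graded R-modules. -/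
open MvPolynomial

/-! Over a field every degree-preserving surjection `π : E → H^j_p(R)` has a degree-preserving
`k`-linear section `σ`, and `σ` is `R`-linear once it commutes with each `xᵢ`. For `m` of degree
`d` in the support of `H^j_p(R)`, the defect `σ (xᵢ m) - xᵢ σ m` lies in `ker π` and has degree
`d + eᵢ`, which has at least `j - 1 > l` negative coordinates. So it lies outside the support
of `H^l_q(R)`, and `ker π`, being the image of `H^l_q(R)` under a degree-preserving map, vanishes
in that degree. -/

open DirectSum

section GradedPieces

variable {ι k A B E : Type*} [Ring k]
  [AddCommGroup A] [Module k A] [AddCommGroup B] [Module k B] [AddCommGroup E] [Module k E]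
  {gA : ι → Submodule k A} {gB : ι → Submodule k B} {gE : ι → Submodule k E}

theorem LinearMap.ext_of_iSup_eq_top {f g : A →ₗ[k] E} (hA : iSup gA = ⊤)
    (h : ∀ d, ∀ m ∈ gA d, f m = g m) : f = g := by
  have hle : ⊤ ≤ LinearMap.eqLocus f g := hA ▸ iSup_le fun d m hm => h d m hm
  exact LinearMap.ext fun m => hle Submodule.mem_top

theorem map_eq_of_graded_surjective (π : E →ₗ[k] A) (hπ : Function.Surjective π)
    (hπgr : ∀ d, ∀ m ∈ gE d, π m ∈ gA d) (hE : iSup gE = ⊤) (hA : iSupIndep gA) (d : ι) :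
    (gE d).map π = gA d := by
  have hsup : ⨆ d, (gE d).map π = ⊤ := by
    rw [← Submodule.map_iSup, hE, Submodule.map_top, LinearMap.range_eq_top.2 hπ]
  exact congrFun ((hA.le_iff_eq_of_iSup_eq_top hsup).1
    fun d => Submodule.map_le_iff_le_comap.2 (hπgr d)) d

theorem surjective_restrict_of_graded (π : E →ₗ[k] A) (hπ : Function.Surjective π)
    (hπgr : ∀ d, ∀ m ∈ gE d, π m ∈ gA d) (hE : iSup gE = ⊤) (hA : iSupIndep gA) (d : ι) :
    Function.Surjective (π.restrict (hπgr d)) := by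
  rintro ⟨m, hm⟩
  rw [← map_eq_of_graded_surjective π hπ hπgr hE hA d] at hm
  obtain ⟨e, he, rfl⟩ := hm
  exact ⟨⟨e, he⟩, rfl⟩

theorem mem_iSup_ne_of_eq_bot {F : Type*} [FunLike F B E] [AddMonoidHomClass F B E] (f : F)
    (hfgr : ∀ d, ∀ m ∈ gB d, f m ∈ gE d) (hB : iSup gB = ⊤) {d : ι} (hd : gB d = ⊥)
    (b : B) : f b ∈ ⨆ (c) (_ : c ≠ d), gE c := by
  have hb : b ∈ ⨆ c, gB c := hB ▸ Submodule.mem_top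
  induction hb using Submodule.iSup_induction' with
  | mem c x hx =>
    by_cases hc : c = d
    · subst hc
      rw [hd, Submodule.mem_bot] at hx
      simp [hx]
    · exact Submodule.mem_iSup_of_mem c (Submodule.mem_iSup_of_mem hc (hfgr c x hx))
  | zero => simp
  | add x y _ _ hx hy => simpa using add_mem hx hy

theorem eq_of_map_eq_of_eq_bot {C F G : Type*} [AddCommGroup C] [FunLike F B E]
    [AddMonoidHomClass F B E] [FunLike G E C] [AddMonoidHomClass G E C] (f : F) (g : G)
    (hker : ∀ e, g e = 0 → e ∈ Set.range f) (hfgr : ∀ d, ∀ m ∈ gB d, f m ∈ gE d)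
    (hB : iSup gB = ⊤) (hE : iSupIndep gE) {d : ι} (hd : gB d = ⊥) {e₁ e₂ : E}
    (he₁ : e₁ ∈ gE d) (he₂ : e₂ ∈ gE d) (h : g e₁ = g e₂) : e₁ = e₂ := by
  obtain ⟨b, hb⟩ := hker (e₁ - e₂) (by rw [map_sub, h, sub_self])
  have hne : e₁ - e₂ ∈ ⨆ (c) (_ : c ≠ d), gE c := hb ▸ mem_iSup_ne_of_eq_bot f hfgr hB hd b
  exact sub_eq_zero.1 (Submodule.disjoint_def.1 (hE d) _ (sub_mem he₁ he₂) hne)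

theorem DirectSum.IsInternal.exists_linearMap_eq [DecidableEq ι] (hA : IsInternal gA)
    (f : ∀ d, gA d →ₗ[k] E) : ∃ σ : A →ₗ[k] E, ∀ d (m : gA d), σ m = f d m := by
  have hbij : Function.Bijective (coeLinearMap gA) := hA
  refine ⟨toModule k ι E f ∘ₗ (LinearEquiv.ofBijective _ hbij).symm, fun d m => ?_⟩
  have hm : (LinearEquiv.ofBijective _ hbij).symm m = lof k ι _ d m := by
    rw [LinearEquiv.symm_apply_eq, LinearEquiv.ofBijective_apply, lof_eq_of, coeLinearMap_of]
  rw [LinearMap.comp_apply, LinearEquiv.coe_coe, hm, toModule_lof]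

theorem exists_graded_rightInverse [DecidableEq ι] [∀ d, Module.Projective k (gA d)]
    (π : E →ₗ[k] A) (hπ : Function.Surjective π) (hπgr : ∀ d, ∀ m ∈ gE d, π m ∈ gA d)
    (hE : iSup gE = ⊤) (hA : IsInternal gA) :
    ∃ σ : A →ₗ[k] E, π ∘ₗ σ = LinearMap.id ∧ ∀ d, ∀ m ∈ gA d, σ m ∈ gE d := by
  have hsurj d := surjective_restrict_of_graded π hπ hπgr hE hA.submodule_iSupIndep d
  choose s hs using fun d => (π.restrict (hπgr d)).exists_rightInverse_of_surjective
    (LinearMap.range_eq_top.2 (hsurj d))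
  obtain ⟨σ, hσ⟩ := hA.exists_linearMap_eq fun d => (gE d).subtype ∘ₗ s d
  refine ⟨σ, LinearMap.ext_of_iSup_eq_top hA.submodule_iSup_eq_top fun d m hm => ?_,
    fun d m hm => ?_⟩
  · simpa [hσ d ⟨m, hm⟩] using congrArg Subtype.val (LinearMap.congr_fun (hs d) ⟨m, hm⟩)
  · simp [hσ d ⟨m, hm⟩]

end GradedPieces

theorem map_smul_of_map_X_smul {σ k M N : Type*} [CommSemiring k]
    [AddCommMonoid M] [Module (MvPolynomial σ k) M] [Module k M]
    [IsScalarTower k (MvPolynomial σ k) M]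
    [AddCommMonoid N] [Module (MvPolynomial σ k) N] [Module k N]
    [IsScalarTower k (MvPolynomial σ k) N]
    (f : M →ₗ[k] N)
    (hX : ∀ i m, f ((X i : MvPolynomial σ k) • m) = (X i : MvPolynomial σ k) • f m)
    (p : MvPolynomial σ k) (m : M) : f (p • m) = p • f m := by
  induction p using MvPolynomial.induction_on generalizing m with
  | C c => rw [← algebraMap_eq, algebraMap_smul, algebraMap_smul, map_smul]
  | add p q hp hq => rw [add_smul, map_add, hp, hq, add_smul]
  | mul_X p i hp => rw [mul_smul, hp, hX, mul_smul]

theorem exists_graded_section {n : ℕ} {k : Type} [Field k] {A B E : Type*} {F : Type*}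
    [AddCommGroup A] [Module (MvPolynomial (Fin n) k) A] [Module k A]
    [IsScalarTower k (MvPolynomial (Fin n) k) A] [AddCommGroup B] [Module k B]
    [AddCommGroup E] [Module (MvPolynomial (Fin n) k) E] [Module k E]
    [IsScalarTower k (MvPolynomial (Fin n) k) E]
    {gA : (Fin n → ℤ) → Submodule k A} {gB : (Fin n → ℤ) → Submodule k B}
    {gE : (Fin n → ℤ) → Submodule k E}
    (hA : IsInternal gA) (hAc : GradingCompat k A gA) (hB : iSup gB = ⊤)
    (hE : IsInternal gE) (hEc : GradingCompat k E gE)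
    [FunLike F B E] [AddMonoidHomClass F B E] (ι : F) (π : E →ₗ[MvPolynomial (Fin n) k] A)
    (hπ : Function.Surjective π) (hker : ∀ e, π e = 0 → e ∈ Set.range ι)
    (hιgr : ∀ d, ∀ m ∈ gB d, ι m ∈ gE d) (hπgr : ∀ d, ∀ m ∈ gE d, π m ∈ gA d)
    (hvanish : ∀ d i, gA d ≠ ⊥ → gB (d + Pi.single i 1) = ⊥) :
    ∃ σ : A →ₗ[MvPolynomial (Fin n) k] E,
      π.comp σ = LinearMap.id ∧ ∀ d, ∀ m ∈ gA d, σ m ∈ gE d := by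
  obtain ⟨σ, hσ, hσgr⟩ := exists_graded_rightInverse (π.restrictScalars k) hπ hπgr
    hE.submodule_iSup_eq_top hA
  have hπσ : ∀ m, π (σ m) = m := LinearMap.congr_fun hσ
  have hX : ∀ i m,
      σ ((X i : MvPolynomial (Fin n) k) • m) = (X i : MvPolynomial (Fin n) k) • σ m := by
    intro i m
    have hm : m ∈ ⨆ d, gA d := hA.submodule_iSup_eq_top ▸ Submodule.mem_top
    induction hm using Submodule.iSup_induction' with
    | mem d x hx =>
      by_cases hd : gA d = ⊥
      · simp [(Submodule.eq_bot_iff _).1 hd x hx]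
      · exact eq_of_map_eq_of_eq_bot ι π hker hιgr hB hE.submodule_iSupIndep (hvanish d i hd)
          (hσgr _ _ (hAc i d x hx)) (hEc i d _ (hσgr d x hx)) (by rw [hπσ, map_smul, hπσ])
    | zero => simp
    | add x y _ _ hx hy => rw [smul_add, map_add, hx, hy, map_add, smul_add]
  exact ⟨{ toFun := σ, map_add' := σ.map_add, map_smul' := map_smul_of_map_X_smul σ hX },
    LinearMap.ext hπσ, hσgr⟩

section SignPatterns

open Finset

variable {n : ℕ}

def MatchesSigns (a d : Fin n → ℤ) : Prop := ∀ i, (a i = -1 → d i < 0) ∧ (a i = 0 → 0 ≤ d i)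

theorem HilbH.eq_bot_of_not_matchesSigns {k : Type} [Field k] {M : Type*} [AddCommGroup M]
    [Module k M] {a : Fin n → ℤ} {g : (Fin n → ℤ) → Submodule k M} (h : HilbH k M a g)
    {d : Fin n → ℤ} [Module.Finite k (g d)] (hd : ¬ MatchesSigns a d) : g d = ⊥ := by
  rw [← Submodule.finrank_eq_zero, h d]
  exact if_neg hd

theorem wt_le_card_neg {a d : Fin n → ℤ} (hd : MatchesSigns a d) : wt a ≤ #{i | d i < 0} :=
  card_le_card fun i hi => by
    simp only [mem_filter, mem_univ, true_and] at hi ⊢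
    exact (hd i).1 hi

theorem card_neg_le_wt {b d : Fin n → ℤ} (hb : isOm b) (hd : MatchesSigns b d) :
    #{i | d i < 0} ≤ wt b :=
  card_le_card fun i hi => by
    simp only [mem_filter, mem_univ, true_and] at hi ⊢
    exact (hb i).resolve_left fun h => (hi.trans_le ((hd i).2 h)).false

theorem card_neg_le_card_neg_add_single (d : Fin n → ℤ) (i : Fin n) :
    #{m | d m < 0} ≤ #{m | (d + Pi.single i 1 : Fin n → ℤ) m < 0} + 1 := by
  refine (card_le_card fun m hm => ?_).trans (card_insert_le i _)
  by_cases hmi : m = i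
  · exact hmi ▸ mem_insert_self _ _
  · simp_all

theorem not_matchesSigns_add_single {a b d : Fin n → ℤ} (hb : isOm b) (hab : wt b + 2 ≤ wt a)
    (hd : MatchesSigns a d) (i : Fin n) : ¬ MatchesSigns b (d + Pi.single i 1) := fun h => by
  have := wt_le_card_neg hd
  have := card_neg_le_wt hb h
  have := card_neg_le_card_neg_add_single d i
  omega

end SignPatterns

theorem stmt_15_general (n : ℕ) (k : Type) [Field k] (a b : Fin n → ℤ)
    (hb : isOm b) (j l : ℕ) (hwa : wt a = j) (hwb : wt b = l)
    (hjl : l + 2 ≤ j)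
    (MA : Type) [AddCommGroup MA] [Module (MvPolynomial (Fin n) k) MA] [Module k MA]
    [IsScalarTower k (MvPolynomial (Fin n) k) MA]
    (MB : Type) [AddCommGroup MB] [Module (MvPolynomial (Fin n) k) MB] [Module k MB]
    (gA : (Fin n → ℤ) → Submodule k MA) (hgA : IsEpsStraight k MA gA)
    (hhA : HilbH k MA a gA)
    (gB : (Fin n → ℤ) → Submodule k MB) (hgB : IsEpsStraight k MB gB)
    (hhB : HilbH k MB b gB)
    -- an arbitrary graded extension `0 → MB → E → MA → 0`
    (E : Type) [AddCommGroup E] [Module (MvPolynomial (Fin n) k) E] [Module k E]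
    [IsScalarTower k (MvPolynomial (Fin n) k) E]
    (gE : (Fin n → ℤ) → Submodule k E)
    (hgE : DirectSum.IsInternal gE ∧ GradingCompat k E gE)
    (ι : MB →ₗ[MvPolynomial (Fin n) k] E) (π : E →ₗ[MvPolynomial (Fin n) k] MA)
    (hπ : Function.Surjective π)
    (hexact : LinearMap.range ι = LinearMap.ker π)
    (hιgr : ∀ d : Fin n → ℤ, ∀ m ∈ gB d, ι m ∈ gE d)
    (hπgr : ∀ d : Fin n → ℤ, ∀ m ∈ gE d, π m ∈ gA d) :
    -- the extension splits by a graded section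
    ∃ σ : MA →ₗ[MvPolynomial (Fin n) k] E,
      π.comp σ = LinearMap.id ∧ ∀ d : Fin n → ℤ, ∀ m ∈ gA d, σ m ∈ gE d := by
  obtain ⟨hAint, hAc, hAfin, -⟩ := hgA
  obtain ⟨hBint, -, hBfin, -⟩ := hgB
  have hker (e : E) (he : π e = 0) : e ∈ Set.range ι := by
    rw [← LinearMap.mem_ker, ← hexact] at he
    exact he
  refine exists_graded_section hAint hAc hBint.submodule_iSup_eq_top hgE.1 hgE.2 ι π hπ hker
    hιgr hπgr fun d i hd => hhB.eq_bot_of_not_matchesSigns ?_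
  have hsigns : MatchesSigns a d := not_imp_comm.1 hhA.eq_bot_of_not_matchesSigns hd
  exact not_matchesSigns_add_single hb (by omega) hsigns i

/-- Vanishing of the graded Ext group `*Ext¹_R(H^j_p(R), H^l_q(R))` for monomial primes
`p = p_a`, `q = p_b` of heights `j = |a|`, `l = |b|` with `l ≤ j - 2`:  every extension of
`ℤⁿ`-graded modules `0 → H^l_q(R) → E → H^j_p(R) → 0` (with degree-preserving maps) admits
a degree-preserving `R`-linear splitting.  The graded modules `H^l_{p_a}(R)`, `H^l_{p_b}(R)`
are encoded as modules isomorphic to the corresponding local cohomology modules, equipped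
with their canonical (`ε`-straight) gradings. -/
theorem stmt_15 (n : ℕ) (k : Type) [Field k] (a b : Fin n → ℤ)
    (ha : isOm a) (hb : isOm b) (j l : ℕ) (hwa : wt a = j) (hwb : wt b = l)
    (hjl : l + 2 ≤ j)
    (MA : Type) [AddCommGroup MA] [Module (MvPolynomial (Fin n) k) MA] [Module k MA]
    [IsScalarTower k (MvPolynomial (Fin n) k) MA]
    (MB : Type) [AddCommGroup MB] [Module (MvPolynomial (Fin n) k) MB] [Module k MB]
    [IsScalarTower k (MvPolynomial (Fin n) k) MB]
    (eA : MA ≃ₗ[MvPolynomial (Fin n) k] LC k (faceIdeal k a) j)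
    (eB : MB ≃ₗ[MvPolynomial (Fin n) k] LC k (faceIdeal k b) l)
    (gA : (Fin n → ℤ) → Submodule k MA) (hgA : IsEpsStraight k MA gA)
    (hhA : HilbH k MA a gA)
    (gB : (Fin n → ℤ) → Submodule k MB) (hgB : IsEpsStraight k MB gB)
    (hhB : HilbH k MB b gB)
    -- an arbitrary graded extension `0 → MB → E → MA → 0`
    (E : Type) [AddCommGroup E] [Module (MvPolynomial (Fin n) k) E] [Module k E]
    [IsScalarTower k (MvPolynomial (Fin n) k) E]
    (gE : (Fin n → ℤ) → Submodule k E)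
    (hgE : DirectSum.IsInternal gE ∧ GradingCompat k E gE)
    (ι : MB →ₗ[MvPolynomial (Fin n) k] E) (π : E →ₗ[MvPolynomial (Fin n) k] MA)
    (hι : Function.Injective ι) (hπ : Function.Surjective π)
    (hexact : LinearMap.range ι = LinearMap.ker π)
    (hιgr : ∀ d : Fin n → ℤ, ∀ m ∈ gB d, ι m ∈ gE d)
    (hπgr : ∀ d : Fin n → ℤ, ∀ m ∈ gE d, π m ∈ gA d) :
    -- the extension splits by a graded section
    ∃ σ : MA →ₗ[MvPolynomial (Fin n) k] E,
      π.comp σ = LinearMap.id ∧ ∀ d : Fin n → ℤ, ∀ m ∈ gA d, σ m ∈ gE d :=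
  stmt_15_general n k a b hb j l hwa hwb hjl MA MB gA hgA hhA gB hgB hhB E gE hgE ι π hπ hexact hιgr
    hπgr
end
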